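/- Let q be a prime with q ≡ 3 (mod 4), and let g be a unit of ℤ[i]/(q) generating its group of units. Let k ≥ 1 be an integer, let t₁, …, t_k and t be natural numbers, and let S ⊆ {1, …, k} be a subset with ∑_{j ∈ S} t_j = t. Let π₁, …, π_k ∈ ℤ[i] be such that the image of π_j in ℤ[i]/(q) equals g^{t_j}, set N := ∏_{j=1}^{k} Norm(π_j) (where Norm(a + b·i) = a² + b²), set s := (q − 1)·t + (t₁ + ⋯ + t_k), and let a, b be integers such that the image of a + b·i in ℤ[i]/(q) equals g^s. Then there exist integers X, Y with X² + Y² = N, X ≡ a (mod q) and Y ≡ b (mod q). -/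
import Mathlib

open GaussianInt

section Aux

variable (q : ℕ) (hq : q.Prime) (hq3 : q % 4 = 3)

local notation "R" => GaussianInt ⧸ Ideal.span {(q : GaussianInt)}

lemma aux_charP (hq : q.Prime) : CharP (GaussianInt ⧸ Ideal.span {(q : GaussianInt)}) q := by
  constructor
  intro n
  have : ((n : GaussianInt ⧸ Ideal.span {(q : GaussianInt)})) =
      Ideal.Quotient.mk _ ((n : ℤ) : GaussianInt) := by push_cast; rfl
  rw [this, Ideal.Quotient.eq_zero_iff_mem, Ideal.mem_span_singleton]
  have h4 : ((q : GaussianInt)) ∣ ((n : ℤ) : GaussianInt) ↔ (q : ℤ) ∣ (n : ℤ) := by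
    have := Zsqrtd.intCast_dvd_intCast (d := -1) (q : ℤ) (n : ℤ)
    simpa using this
  rw [h4, Int.natCast_dvd_natCast]

lemma aux_mk_intCast_pow (hq : q.Prime) (c : ℤ) :
    Ideal.Quotient.mk (Ideal.span {(q : GaussianInt)}) ((c : GaussianInt)) ^ q =
    Ideal.Quotient.mk (Ideal.span {(q : GaussianInt)}) ((c : GaussianInt)) := by
  haveI : Fact q.Prime := ⟨hq⟩
  have h : (q : ℤ) ∣ c ^ q - c := by
    have := ZMod.pow_card (c : ZMod q)
    have : ((c ^ q - c : ℤ) : ZMod q) = 0 := by push_cast [this]; ring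
    exact (ZMod.intCast_zmod_eq_zero_iff_dvd _ _).mp this
  have h2 : ((q : GaussianInt)) ∣ ((c ^ q : ℤ) : GaussianInt) - (c : GaussianInt) := by
    obtain ⟨m, hm⟩ := h
    have := congrArg (fun x : ℤ => (x : GaussianInt)) hm
    push_cast at this
    exact ⟨(m : GaussianInt), by push_cast; exact this⟩
  have h3 : Ideal.Quotient.mk (Ideal.span {(q : GaussianInt)}) ((c ^ q : ℤ) : GaussianInt) =
      Ideal.Quotient.mk _ (c : GaussianInt) := by
    rw [Ideal.Quotient.eq, Ideal.mem_span_singleton]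
    exact h2
  rw [← map_pow]
  have h5 : ((c : GaussianInt)) ^ q = ((c ^ q : ℤ) : GaussianInt) := by push_cast; ring
  rw [h5, h3]

lemma aux_star (hq : q.Prime) (hq3 : q % 4 = 3) (x : GaussianInt) :
    Ideal.Quotient.mk (Ideal.span {(q : GaussianInt)}) x ^ q =
    Ideal.Quotient.mk (Ideal.span {(q : GaussianInt)}) (star x) := by
  haveI : Fact q.Prime := ⟨hq⟩
  haveI := aux_charP q hq
  set φ := Ideal.Quotient.mk (Ideal.span {(q : GaussianInt)})
  set I : GaussianInt := ⟨0, 1⟩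
  have hx : x = (x.re : GaussianInt) + (x.im : GaussianInt) * I := by
    ext <;> simp [I, Zsqrtd.ext_iff]
  have hstar : star x = (x.re : GaussianInt) - (x.im : GaussianInt) * I := by
    ext <;> simp [I, Zsqrtd.ext_iff]
  have hI2 : I ^ 2 = -1 := by ext <;> simp [I, pow_two]
  obtain ⟨m, hm⟩ : ∃ m, q = 4 * m + 3 := ⟨q / 4, by omega⟩
  have hIq : I ^ q = -I := by
    rw [hm, pow_add, pow_mul]
    have : I ^ 4 = 1 := by
      have : I ^ 4 = (I ^ 2) ^ 2 := by ring
      rw [this, hI2]; ring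
    rw [this, one_pow, one_mul]
    have : I ^ 3 = I ^ 2 * I := by ring
    rw [this, hI2]; ring
  calc φ x ^ q = (φ (x.re : GaussianInt) + φ (x.im : GaussianInt) * φ I) ^ q := by
        rw [← map_mul, ← map_add, ← hx]
    _ = φ (x.re : GaussianInt) ^ q + (φ (x.im : GaussianInt) * φ I) ^ q := add_pow_char ..
    _ = φ (x.re : GaussianInt) + φ (x.im : GaussianInt) * φ (I ^ q) := by
        rw [mul_pow, aux_mk_intCast_pow q hq, aux_mk_intCast_pow q hq, map_pow]
    _ = φ (star x) := by rw [hIq, hstar, map_sub, map_mul, map_neg]; ring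

end Aux

/-- Completeness of the subset-sum reduction: if some subset `S`
of the `t_j` sums to `t`, then `N = ∏ Norm(π_j)` is a sum of two squares `X² + Y²`
with `X ≡ a (mod q)` and `Y ≡ b (mod q)`, where `a + b·i ≡ g^s (mod q)` and
`s = (q−1)t + ∑ t_j`. -/
theorem subset_sum_reduction_completeness
    (q : ℕ) (hq : q.Prime) (hq3 : q % 4 = 3)
    (g : (GaussianInt ⧸ Ideal.span {(q : GaussianInt)})ˣ)
    (hg : ∀ u : (GaussianInt ⧸ Ideal.span {(q : GaussianInt)})ˣ,
      u ∈ Subgroup.zpowers g)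
    (k : ℕ) (hk : 1 ≤ k) (tj : Fin k → ℕ) (t : ℕ)
    (S : Finset (Fin k)) (hS : ∑ j ∈ S, tj j = t)
    (π : Fin k → GaussianInt)
    (hπ : ∀ j, Ideal.Quotient.mk (Ideal.span {(q : GaussianInt)}) (π j) =
      (g : GaussianInt ⧸ Ideal.span {(q : GaussianInt)}) ^ tj j)
    (N : ℤ) (hN : N = ∏ j, Zsqrtd.norm (π j))
    (s : ℕ) (hs : s = (q - 1) * t + ∑ j, tj j)
    (a b : ℤ)
    (hab : Ideal.Quotient.mk (Ideal.span {(q : GaussianInt)})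
        (⟨a, b⟩ : GaussianInt) =
      (g : GaussianInt ⧸ Ideal.span {(q : GaussianInt)}) ^ s) :
    ∃ X Y : ℤ, X ^ 2 + Y ^ 2 = N ∧ (q : ℤ) ∣ X - a ∧ (q : ℤ) ∣ Y - b := by
  set φ := Ideal.Quotient.mk (Ideal.span {(q : GaussianInt)}) with hφ
  set z : GaussianInt := (∏ j ∈ S, star (π j)) * ∏ j ∈ Sᶜ, π j with hz
  -- norm of z is N
  have hnorm : Zsqrtd.norm z = N := by
    have hmp : ∀ (u : Finset (Fin k)) (f : Fin k → GaussianInt),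
        Zsqrtd.norm (∏ j ∈ u, f j) = ∏ j ∈ u, Zsqrtd.norm (f j) := fun u f =>
      map_prod Zsqrtd.normMonoidHom f u
    rw [hz, Zsqrtd.norm_mul, hmp, hmp]
    simp only [Zsqrtd.norm_conj]
    rw [Finset.prod_mul_prod_compl, hN]
  -- image of z
  have hsum : ∑ j ∈ S, tj j + ∑ j ∈ Sᶜ, tj j = ∑ j, tj j :=
    Finset.sum_add_sum_compl S tj
  have htle : t ≤ ∑ j, tj j := by omega
  have hq2 : 2 ≤ q := hq.two_le
  have hφz : φ z = (g : GaussianInt ⧸ Ideal.span {(q : GaussianInt)}) ^ s := by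
    rw [hz, map_mul, map_prod, map_prod]
    have h1 : ∀ j ∈ S, φ (star (π j)) =
        (g : GaussianInt ⧸ Ideal.span {(q : GaussianInt)}) ^ (q * tj j) := by
      intro j _
      rw [← aux_star q hq hq3, hπ j, ← pow_mul, mul_comm]
    rw [Finset.prod_congr rfl h1, Finset.prod_congr rfl (fun j _ => hπ j),
      Finset.prod_pow_eq_pow_sum, Finset.prod_pow_eq_pow_sum, ← pow_add]
    congr 1
    rw [← Finset.mul_sum, hS, hs, ← hsum, hS]
    obtain ⟨p, hp⟩ : ∃ p, q = p + 1 := ⟨q - 1, by omega⟩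
    subst hp
    simp only [Nat.add_sub_cancel]
    ring
  have hdvd : (q : GaussianInt) ∣ z - ⟨a, b⟩ := by
    rw [← Ideal.mem_span_singleton, ← Ideal.Quotient.eq]
    rw [hφz, hab]
  have hdvd' : (((q : ℤ)) : GaussianInt) ∣ z - ⟨a, b⟩ := by exact_mod_cast hdvd
  rw [Zsqrtd.intCast_dvd] at hdvd'
  refine ⟨z.re, z.im, ?_, ?_, ?_⟩
  · rw [← hnorm, Zsqrtd.norm_def]; ring
  · simpa using hdvd'.1
  · simpa using hdvd'.2
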